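/- Fix x̌, x̂ ∈ ℝⁿ with x̌⁽ˡ⁾ ≤ x̂⁽ˡ⁾ for every l, and let g be the associated erf-product function. Then g is quasiconcave on ℝⁿ: for every c ∈ ℝ, the superlevel set {z ∈ ℝⁿ : g(z) ≥ c} is convex. -/

import Mathlib

/-- The Gauss error function `erf x = (2/√π) ∫₀ˣ exp (−t²) dt`. -/
noncomputable def erf (x : ℝ) : ℝ :=
  (2 / Real.sqrt Real.pi) * ∫ t in (0:ℝ)..x, Real.exp (-t ^ 2)

/-- The erf-product function
`g z = 2⁻ⁿ ∏ₗ (erf((zₗ − x̌ₗ)/√2) − erf((zₗ − x̂ₗ)/√2))`. -/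
noncomputable def gerf {n : ℕ} (xlo xhi : Fin n → ℝ) (z : Fin n → ℝ) : ℝ :=
  (1 / 2 : ℝ) ^ n *
    ∏ l, (erf ((z l - xlo l) / Real.sqrt 2) - erf ((z l - xhi l) / Real.sqrt 2))

/-!
Each factor `t ↦ erf ((t - a) / √2) - erf ((t - b) / √2)` with `a < b` is log-concave. Up to
scaling it is `W t = ∫_{t-b}^{t-a} e^{-s²} ds`, and `W W'' ≤ W'²` amounts to
`(v e^{-v²} - u e^{-u²}) ∫ᵥᵘ e^{-s²} ≤ (e^{-v²} - e^{-u²})² / 2` for `v ≤ u`. The difference of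
the two sides vanishes at `u = v`, first increases and then decreases in `u`, and its limit at
`∞` is nonnegative by Mills' ratio inequality. Hence `log g` is a sum of concave functions of the
separate coordinates, and `g = exp (log g)` is quasiconcave. If some `x̌ₗ = x̂ₗ`, then `g ≡ 0`.
-/

open Real MeasureTheory Set Filter Topology

lemma concaveOn_sum {𝕜 E β ι : Type*} [Semiring 𝕜] [PartialOrder 𝕜] [AddCommMonoid E]
    [AddCommMonoid β] [PartialOrder β] [IsOrderedAddMonoid β] [SMul 𝕜 E] [Module 𝕜 β]
    [PosSMulMono 𝕜 β] {s : Set E} (hs : Convex 𝕜 s) {t : Finset ι} {f : ι → E → β}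
    (hf : ∀ i ∈ t, ConcaveOn 𝕜 s (f i)) : ConcaveOn 𝕜 s fun x => ∑ i ∈ t, f i x := by
  classical
  induction t using Finset.induction_on with
  | empty => simpa using concaveOn_const (0 : β) hs
  | insert i t hi ih =>
    simp only [Finset.sum_insert hi]
    exact (hf i (t.mem_insert_self i)).add (ih fun j hj => hf j (Finset.mem_insert_of_mem hj))

lemma concaveOn_univ_sum_apply {ι : Type*} [Fintype ι] {φ : ι → ℝ → ℝ}
    (hφ : ∀ i, ConcaveOn ℝ univ (φ i)) : ConcaveOn ℝ univ fun z : ι → ℝ => ∑ i, φ i (z i) :=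
  concaveOn_sum convex_univ fun i _ => by
    have h := (hφ i).comp_linearMap (LinearMap.proj (R := ℝ) (φ := fun _ : ι => ℝ) i)
    rwa [preimage_univ] at h

lemma quasiconcaveOn_of_concaveOn_log {E : Type*} [AddCommGroup E] [Module ℝ E] {f : E → ℝ}
    (hpos : ∀ x, 0 < f x) (hf : ConcaveOn ℝ univ fun x => log (f x)) :
    QuasiconcaveOn ℝ univ f := by
  have h := hf.quasiconcaveOn.monotone_comp exp_monotone
  simpa only [Function.comp_def, exp_log (hpos _)] using h

lemma concaveOn_log_of_mul_deriv2_le_sq {W W' W'' : ℝ → ℝ} (hpos : ∀ t, 0 < W t)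
    (hW : ∀ t, HasDerivAt W (W' t) t) (hW' : ∀ t, HasDerivAt W' (W'' t) t)
    (hle : ∀ t, W t * W'' t ≤ W' t ^ 2) : ConcaveOn ℝ univ fun t => log (W t) := by
  have hlog : ∀ t, HasDerivAt (fun t => log (W t)) (W' t / W t) t :=
    fun t => (hW t).log (hpos t).ne'
  have hanti : Antitone fun t => W' t / W t := by
    refine antitone_of_hasDerivAt_nonpos (fun t => (hW' t).div (hW t) (hpos t).ne') fun t => ?_
    exact div_nonpos_of_nonpos_of_nonneg (by linarith [hle t, sq (W' t)]) (sq_nonneg _)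
  refine Antitone.concaveOn_univ_of_deriv (fun t => (hlog t).differentiableAt) ?_
  rwa [show deriv (fun t => log (W t)) = fun t => W' t / W t from funext fun t => (hlog t).deriv]

lemma continuous_exp_neg_sq : Continuous fun s : ℝ => exp (-s ^ 2) := by fun_prop

lemma integrable_exp_neg_sq : Integrable fun s : ℝ => exp (-s ^ 2) := by
  simpa using integrable_exp_neg_mul_sq one_pos

lemma hasDerivAt_exp_neg_sq (u : ℝ) :
    HasDerivAt (fun u : ℝ => exp (-u ^ 2)) (-2 * u * exp (-u ^ 2)) u := by
  convert ((hasDerivAt_pow 2 u).fun_neg).exp using 1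
  push_cast
  ring

lemma tendsto_exp_neg_sq_atTop : Tendsto (fun u : ℝ => exp (-u ^ 2)) atTop (𝓝 0) :=
  tendsto_exp_neg_atTop_nhds_zero.comp (tendsto_pow_atTop two_ne_zero)

lemma tendsto_mul_exp_neg_sq_atTop : Tendsto (fun u : ℝ => u * exp (-u ^ 2)) atTop (𝓝 0) := by
  refine ((tendsto_rpow_abs_mul_exp_neg_mul_sq_cocompact one_pos 1).mono_left
    atTop_le_cocompact).congr' ?_
  filter_upwards [eventually_ge_atTop 0] with u hu
  simp [abs_of_nonneg hu]

lemma mul_integral_Ioi_exp_neg_sq_le (v : ℝ) :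
    v * ∫ s in Ioi v, exp (-s ^ 2) ≤ exp (-v ^ 2) / 2 := by
  rcases le_or_gt v 0 with hv | hv
  · exact (mul_nonpos_of_nonpos_of_nonneg hv
      (setIntegral_nonneg measurableSet_Ioi fun s _ => (exp_pos _).le)).trans (by positivity)
  have hint : IntegrableOn (fun s : ℝ => s * exp (-s ^ 2)) (Ioi v) := by
    simpa using (integrable_mul_exp_neg_mul_sq one_pos).integrableOn
  have hprim : ∫ s in Ioi v, s * exp (-s ^ 2) = exp (-v ^ 2) / 2 := by
    rw [integral_Ioi_of_hasDerivAt_of_tendsto' (f := fun s => -exp (-s ^ 2) / 2)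
      (fun x _ => ((hasDerivAt_exp_neg_sq x).neg.div_const 2).congr_deriv (by ring)) hint
      (by simpa using (tendsto_exp_neg_sq_atTop.neg.div_const 2))]
    ring
  calc v * ∫ s in Ioi v, exp (-s ^ 2)
      = ∫ s in Ioi v, v * exp (-s ^ 2) := (integral_const_mul _ _).symm
    _ ≤ ∫ s in Ioi v, s * exp (-s ^ 2) :=
        setIntegral_mono_on (integrable_exp_neg_sq.integrableOn.const_mul v) hint
          measurableSet_Ioi fun s hs => by gcongr; exact (mem_Ioi.mp hs).le
    _ = exp (-v ^ 2) / 2 := hprim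

noncomputable def gaussMass (v u : ℝ) : ℝ := ∫ s in v..u, exp (-s ^ 2)

lemma hasDerivAt_gaussMass (v u : ℝ) : HasDerivAt (gaussMass v) (exp (-u ^ 2)) u :=
  (continuous_exp_neg_sq.integral_hasStrictDerivAt v u).hasDerivAt

lemma gaussMass_self (v : ℝ) : gaussMass v v = 0 := intervalIntegral.integral_same

lemma gaussMass_nonneg {v u : ℝ} (h : v ≤ u) : 0 ≤ gaussMass v u :=
  intervalIntegral.integral_nonneg h fun _ _ => (exp_pos _).le

lemma monotone_gaussMass (v : ℝ) : Monotone (gaussMass v) :=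
  monotone_of_hasDerivAt_nonneg (hasDerivAt_gaussMass v) fun _ => (exp_pos _).le

lemma tendsto_gaussMass_atTop (v : ℝ) :
    Tendsto (gaussMass v) atTop (𝓝 (∫ s in Ioi v, exp (-s ^ 2))) :=
  intervalIntegral_tendsto_integral_Ioi v integrable_exp_neg_sq.integrableOn tendsto_id

/-- The defect in `W W'' ≤ W'²` for `W t = ∫_{t+v}^{t+u} e^{-s²} ds`, at `t = 0`, divided by `2`. -/
noncomputable def gaussDefect (v u : ℝ) : ℝ :=
  (exp (-v ^ 2) - exp (-u ^ 2)) ^ 2 / 2 - (v * exp (-v ^ 2) - u * exp (-u ^ 2)) * gaussMass v u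

noncomputable def gaussDefectFactor (v u : ℝ) : ℝ :=
  2 * u * exp (-v ^ 2) - u * exp (-u ^ 2) - v * exp (-v ^ 2) + (1 - 2 * u ^ 2) * gaussMass v u

lemma gaussDefect_self (v : ℝ) : gaussDefect v v = 0 := by
  simp [gaussDefect, gaussMass_self]

lemma gaussDefectFactor_self (v : ℝ) : gaussDefectFactor v v = 0 := by
  simp only [gaussDefectFactor, gaussMass_self]
  ring

lemma hasDerivAt_gaussDefect (v u : ℝ) :
    HasDerivAt (gaussDefect v) (exp (-u ^ 2) * gaussDefectFactor v u) u := by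
  have hE := hasDerivAt_exp_neg_sq u
  have hM := hasDerivAt_gaussMass v u
  have := ((((hasDerivAt_const u (exp (-v ^ 2))).fun_sub hE).fun_pow 2).div_const 2).fun_sub
    (((hasDerivAt_const u (v * exp (-v ^ 2))).fun_sub ((hasDerivAt_id' u).fun_mul hE)).fun_mul hM)
  refine this.congr_deriv ?_
  simp only [gaussDefectFactor]
  push_cast
  ring

lemma hasDerivAt_gaussDefectFactor (v u : ℝ) :
    HasDerivAt (gaussDefectFactor v) (2 * exp (-v ^ 2) - 4 * u * gaussMass v u) u := by
  have hE := hasDerivAt_exp_neg_sq u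
  have hM := hasDerivAt_gaussMass v u
  have := (((((hasDerivAt_id u).const_mul 2).mul_const (exp (-v ^ 2))).sub
    ((hasDerivAt_id u).mul hE)).sub_const (v * exp (-v ^ 2))).add
    ((((hasDerivAt_pow 2 u).const_mul 2).const_sub 1).mul hM)
  refine this.congr_deriv ?_
  simp only [id]
  push_cast
  ring

/-- The derivative `2 e^{-v²} - 4 u ∫ᵥᵘ e^{-s²}` is positive for `v ≤ u ≤ 0` and decreasing
for `u ≥ max v 0`, so it changes sign at most once, from `+` to `-`. -/
lemma gaussDefectFactor_neg_of_le {v w x : ℝ} (hvw : v < w) (hw : gaussDefectFactor v w < 0)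
    (hwx : w ≤ x) : gaussDefectFactor v x < 0 := by
  rcases hwx.eq_or_lt with rfl | hwx
  · exact hw
  by_contra! hx
  have hcont : Continuous (gaussDefectFactor v) :=
    continuous_iff_continuousAt.2 fun u => (hasDerivAt_gaussDefectFactor v u).continuousAt
  obtain ⟨ξ₁, hξ₁, hslope₁⟩ := exists_hasDerivAt_eq_slope _ _ hvw hcont.continuousOn
    fun u _ => hasDerivAt_gaussDefectFactor v u
  obtain ⟨ξ₂, hξ₂, hslope₂⟩ := exists_hasDerivAt_eq_slope _ _ hwx hcont.continuousOn
    fun u _ => hasDerivAt_gaussDefectFactor v u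
  rw [gaussDefectFactor_self, sub_zero] at hslope₁
  have hneg : 2 * exp (-v ^ 2) - 4 * ξ₁ * gaussMass v ξ₁ < 0 := by
    rw [hslope₁]; exact div_neg_of_neg_of_pos hw (by linarith)
  have hpos : 0 < 2 * exp (-v ^ 2) - 4 * ξ₂ * gaussMass v ξ₂ := by
    rw [hslope₂]; exact div_pos (by linarith) (by linarith)
  have hM₁ : 0 ≤ gaussMass v ξ₁ := gaussMass_nonneg hξ₁.1.le
  have hξ₁_pos : 0 < ξ₁ := by
    by_contra! h
    nlinarith [exp_pos (-v ^ 2)]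
  have hξ : ξ₁ ≤ ξ₂ := by linarith [hξ₁.2, hξ₂.1]
  have hM : gaussMass v ξ₁ ≤ gaussMass v ξ₂ := monotone_gaussMass v hξ
  nlinarith

lemma tendsto_gaussDefect_atTop (v : ℝ) :
    Tendsto (gaussDefect v) atTop
      (𝓝 (exp (-v ^ 2) ^ 2 / 2 - v * exp (-v ^ 2) * ∫ s in Ioi v, exp (-s ^ 2))) := by
  have := ((((tendsto_const_nhds (x := exp (-v ^ 2))).sub tendsto_exp_neg_sq_atTop).pow 2).div_const
    2).sub (((tendsto_const_nhds (x := v * exp (-v ^ 2))).sub tendsto_mul_exp_neg_sq_atTop).mul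
    (tendsto_gaussMass_atTop v))
  rw [sub_zero, sub_zero] at this
  exact this

lemma gaussDefect_nonneg {v u : ℝ} (h : v ≤ u) : 0 ≤ gaussDefect v u := by
  have hcont : Continuous (gaussDefect v) :=
    continuous_iff_continuousAt.2 fun x => (hasDerivAt_gaussDefect v x).continuousAt
  have hderiv (D : Set ℝ) : ∀ x ∈ D, HasDerivWithinAt (gaussDefect v)
      (exp (-x ^ 2) * gaussDefectFactor v x) D x :=
    fun x _ => (hasDerivAt_gaussDefect v x).hasDerivWithinAt
  by_cases hfac : ∀ x ∈ Icc v u, 0 ≤ gaussDefectFactor v x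
  · have hmono : MonotoneOn (gaussDefect v) (Icc v u) :=
      monotoneOn_of_hasDerivWithinAt_nonneg (convex_Icc v u) hcont.continuousOn (hderiv _)
        fun x hx => mul_nonneg (exp_pos _).le (hfac x (interior_subset hx))
    have := hmono ⟨le_rfl, h⟩ ⟨h, le_rfl⟩ h
    rwa [gaussDefect_self] at this
  · push Not at hfac
    obtain ⟨w, hw, hfw⟩ := hfac
    have hvw : v < w := hw.1.lt_of_ne fun hvw => by
      rw [← hvw, gaussDefectFactor_self] at hfw; exact lt_irrefl 0 hfw
    have hanti : AntitoneOn (gaussDefect v) (Ici w) :=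
      antitoneOn_of_hasDerivWithinAt_nonpos (convex_Ici w) hcont.continuousOn (hderiv _)
        fun x hx => mul_nonpos_of_nonneg_of_nonpos (exp_pos _).le
          (gaussDefectFactor_neg_of_le hvw hfw (interior_subset hx)).le
    have hlim := le_of_tendsto (tendsto_gaussDefect_atTop v)
      (eventually_ge_atTop u |>.mono fun x hx => hanti hw.2 (hw.2.trans hx) hx)
    nlinarith [mul_integral_Ioi_exp_neg_sq_le v, exp_pos (-v ^ 2)]

lemma mul_gaussMass_le_sq {v u : ℝ} (h : v ≤ u) :
    (v * exp (-v ^ 2) - u * exp (-u ^ 2)) * gaussMass v u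
      ≤ (exp (-v ^ 2) - exp (-u ^ 2)) ^ 2 / 2 := by
  have := gaussDefect_nonneg h
  rw [gaussDefect] at this
  linarith

lemma hasDerivAt_erf (x : ℝ) : HasDerivAt erf (2 / √π * exp (-x ^ 2)) x :=
  (hasDerivAt_gaussMass 0 x).const_mul _

lemma strictMono_erf : StrictMono erf :=
  strictMono_of_hasDerivAt_pos hasDerivAt_erf fun x => by positivity

lemma erf_sub_erf (a b : ℝ) : erf b - erf a = 2 / √π * gaussMass a b := by
  rw [erf, erf, ← mul_sub, gaussMass, intervalIntegral.integral_interval_sub_left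
    (continuous_exp_neg_sq.intervalIntegrable _ _) (continuous_exp_neg_sq.intervalIntegrable _ _)]

lemma concaveOn_log_erf_sub_erf {α β : ℝ} (h : α < β) :
    ConcaveOn ℝ univ fun t => log (erf (t - α) - erf (t - β)) := by
  set c := 2 / √π
  have hlin (γ t : ℝ) : HasDerivAt (fun t => t - γ) 1 t := (hasDerivAt_id' t).sub_const γ
  refine concaveOn_log_of_mul_deriv2_le_sq
    (W' := fun t => c * (exp (-(t - α) ^ 2) - exp (-(t - β) ^ 2)))
    (W'' := fun t => c * (-2 * (t - α) * exp (-(t - α) ^ 2) + 2 * (t - β) * exp (-(t - β) ^ 2)))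
    (fun t => sub_pos.2 (strictMono_erf (by linarith))) (fun t => ?_) (fun t => ?_) (fun t => ?_)
  · have := ((hasDerivAt_erf _).comp t (hlin α t)).sub ((hasDerivAt_erf _).comp t (hlin β t))
    exact this.congr_deriv (by ring)
  · have := (((hasDerivAt_exp_neg_sq _).comp t (hlin α t)).sub
      ((hasDerivAt_exp_neg_sq _).comp t (hlin β t))).const_mul c
    exact this.congr_deriv (by ring)
  · have key := mul_gaussMass_le_sq (show t - β ≤ t - α by linarith)
    rw [erf_sub_erf]
    linear_combination 2 * mul_le_mul_of_nonneg_left key (sq_nonneg c)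

lemma concaveOn_log_erf_sub_erf_div {σ a b : ℝ} (hσ : 0 < σ) (h : a < b) :
    ConcaveOn ℝ univ fun t => log (erf ((t - a) / σ) - erf ((t - b) / σ)) := by
  have := (concaveOn_log_erf_sub_erf (div_lt_div_of_pos_right h hσ)).comp_linearMap
    (σ⁻¹ • LinearMap.id)
  rw [preimage_univ] at this
  refine this.congr fun t _ => ?_
  simp [div_eq_inv_mul, mul_sub]

lemma erf_sub_erf_div_pos {σ a b : ℝ} (hσ : 0 < σ) (h : a < b) (t : ℝ) :
    0 < erf ((t - a) / σ) - erf ((t - b) / σ) :=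
  sub_pos.2 (strictMono_erf (div_lt_div_of_pos_right (by linarith) hσ))

section Gerf

variable {n : ℕ} {xlo xhi : Fin n → ℝ}

lemma gerf_eq_zero_of_eq {l : Fin n} (hl : xlo l = xhi l) (z : Fin n → ℝ) :
    gerf xlo xhi z = 0 :=
  mul_eq_zero_of_right _ (Finset.prod_eq_zero (Finset.mem_univ l) (by rw [hl, sub_self]))

lemma gerf_pos (h : ∀ l, xlo l < xhi l) (z : Fin n → ℝ) : 0 < gerf xlo xhi z :=
  mul_pos (by positivity) (Finset.prod_pos fun l _ =>
    erf_sub_erf_div_pos (sqrt_pos.2 two_pos) (h l) (z l))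

lemma concaveOn_log_gerf (h : ∀ l, xlo l < xhi l) :
    ConcaveOn ℝ univ fun z => log (gerf xlo xhi z) := by
  have hfac (z : Fin n → ℝ) (l : Fin n) :=
    (erf_sub_erf_div_pos (sqrt_pos.2 two_pos) (h l) (z l)).ne'
  have heq : (fun z => log (gerf xlo xhi z)) = fun z =>
      ∑ l, log (erf ((z l - xlo l) / √2) - erf ((z l - xhi l) / √2)) + log ((1 / 2) ^ n) := by
    funext z
    rw [gerf, log_mul (by positivity) (Finset.prod_ne_zero_iff.2 fun l _ => hfac z l),
      log_prod fun l _ => hfac z l, add_comm]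
  rw [heq]
  exact (concaveOn_univ_sum_apply fun l =>
    concaveOn_log_erf_sub_erf_div (sqrt_pos.2 two_pos) (h l)).add_const _

end Gerf

/-- the erf-product function `g` is quasiconcave on `ℝⁿ`: all of its
superlevel sets are convex. -/
theorem gerf_quasiconcave
    {n : ℕ} (xlo xhi : Fin n → ℝ) (hx : ∀ l, xlo l ≤ xhi l) :
    ∀ c : ℝ, Convex ℝ {z : Fin n → ℝ | c ≤ gerf xlo xhi z} := by
  have hq : QuasiconcaveOn ℝ univ (gerf xlo xhi) := by
    by_cases hdeg : ∃ l, xlo l = xhi l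
    · obtain ⟨l, hl⟩ := hdeg
      rw [funext (gerf_eq_zero_of_eq hl)]
      exact (concaveOn_const 0 convex_univ).quasiconcaveOn
    · push Not at hdeg
      have hlt (l : Fin n) : xlo l < xhi l := (hx l).lt_of_ne (hdeg l)
      exact quasiconcaveOn_of_concaveOn_log (gerf_pos hlt) (concaveOn_log_gerf hlt)
  exact fun c => by simpa using hq c
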